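/- Let w₀ ∈ W be a longest element, i.e. an element satisfying w₀·R⁺ = −R⁺. Then for every w ∈ W, the set S_w⁺ is empty if and only if w lies in the coset W_{J₀}·w₀, i.e. w·w₀⁻¹ ∈ W_{J₀}. -/

import Mathlib

open scoped RealInnerProductSpace

variable {V : Type*} [NormedAddCommGroup V] [InnerProductSpace ℝ V]

/-- The orthogonal reflection `s_α` in the hyperplane perpendicular to `α`,
`s_α x = x - (2⟪x,α⟫/⟪α,α⟫) • α`, as a linear map. -/
noncomputable def reflMap (α : V) : V →ₗ[ℝ] V where
  toFun x := x - (2 * ⟪x, α⟫ / ⟪α, α⟫) • α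
  map_add' x y := by
    try dsimp only
    rw [inner_add_left,
      show 2 * (⟪x, α⟫ + ⟪y, α⟫) / ⟪α, α⟫
          = 2 * ⟪x, α⟫ / ⟪α, α⟫ + 2 * ⟪y, α⟫ / ⟪α, α⟫ by ring,
      add_smul]
    abel
  map_smul' c x := by
    try dsimp only
    rw [RingHom.id_apply, real_inner_smul_left, smul_sub,
      show 2 * (c * ⟪x, α⟫) / ⟪α, α⟫ = c * (2 * ⟪x, α⟫ / ⟪α, α⟫) by ring,
      mul_smul]

/-- A finite reduced (crystallographic) root system `R` spanning `V`. -/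
structure IsRootSystem (R : Set V) : Prop where
  finite : R.Finite
  zero_not_mem : (0 : V) ∉ R
  span_top : Submodule.span ℝ R = ⊤
  refl_mem : ∀ α ∈ R, ∀ β ∈ R, reflMap α β ∈ R
  reduced : ∀ α ∈ R, ∀ c : ℝ, c • α ∈ R → c = 1 ∨ c = -1
  crystallographic : ∀ α ∈ R, ∀ β ∈ R, ∃ n : ℤ, 2 * ⟪β, α⟫ / ⟪α, α⟫ = (n : ℝ)

/-- The set `R⁺` of positive roots with respect to a base `Δ`: the roots that are
nonnegative integer combinations of the elements of `Δ`. -/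
def posRoots (R Δ : Set V) : Set V :=
  {α ∈ R | α ∈ AddSubmonoid.closure Δ}

/-- `Δ` is a base (system of simple roots) of the root system `R`: a linearly
independent subset of `R` such that every root lies in exactly one of `R⁺`, `-R⁺`. -/
structure IsBase (R Δ : Set V) : Prop where
  subset : Δ ⊆ R
  indep : LinearIndependent ℝ ((↑) : Δ → V)
  pos_xor_neg : ∀ α ∈ R, Xor' (α ∈ posRoots R Δ) (-α ∈ posRoots R Δ)

/-- The subgroup of `GL(V)` generated by the reflections `s_α` for `α ∈ S`.
For `S = R` this is the Weyl group `W`; for `S = J ⊆ Δ` this is the subgroup `W_J`. -/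
def weylGroup (S : Set V) : Subgroup (V ≃ₗ[ℝ] V) :=
  Subgroup.closure {g | ∃ α ∈ S, ∀ x, g x = reflMap α x}

/-- The set `R_J := R ∩ span_ℝ(J)`. -/
def rootsIn (R J : Set V) : Set V :=
  R ∩ (Submodule.span ℝ J : Submodule ℝ V)

/-- `S_w⁺ := {α ∈ Δ : w·α ∈ R⁺ and w·α ∉ R_{J₀}}`. -/
def Spos (R Δ J₀ : Set V) (w : V ≃ₗ[ℝ] V) : Set V :=
  {α ∈ Δ | w α ∈ posRoots R Δ ∧ w α ∉ rootsIn R J₀}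

/-- `S_w⁻ := {α ∈ Δ : w·α ∈ -R⁺ and w·α ∉ R_{J₀}}`. -/
def Sneg (R Δ J₀ : Set V) (w : V ≃ₗ[ℝ] V) : Set V :=
  {α ∈ Δ | -(w α) ∈ posRoots R Δ ∧ w α ∉ rootsIn R J₀}

/-!
Write `u = w w₀⁻¹`. Since `-w₀` preserves `R⁺`, the identity `w α = -u (-w₀ α)` relates the
values of `w` on simple roots to those of `u` on positive roots.

An element of `W_{J₀}` moves every vector by an element of `span J₀`, while a positive root
outside `span J₀` has a positive coordinate outside `J₀`; so `W_{J₀}` maps `R⁺ \ span J₀` into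
`R⁺`, and `u ∈ W_{J₀}` forces `S_w⁺ = ∅`.

Conversely, if `S_w⁺ = ∅`, the coordinates outside `J₀` of `w α` are `≤ 0` for simple `α`,
hence for all positive `α`; so `w` maps `R⁺` into `-R⁺ ∪ span J₀` and `u` maps `Δ` into
`R⁺ ∪ span J₀`. Such a `u` lies in `W_{J₀}`,
by induction on the length of a word for `u` in the simple reflections, which generate `W`:
if `u α > 0` for the last letter `α`, the exchange condition shortens the word; if `u α < 0`,
then `u α ∈ span J₀`, the shorter word `u s_α` still maps `Δ` into `R⁺ ∪ span J₀`, and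
`u s_α ∈ W_{J₀}` sends `α` to `-u α ∈ span J₀`, so `α ∈ J₀`.
-/

lemma reflMap_apply (α x : V) : reflMap α x = x - (2 * ⟪x, α⟫ / ⟪α, α⟫) • α := rfl

lemma reflMap_self {α : V} (hα : α ≠ 0) : reflMap α α = -α := by
  have h : ⟪α, α⟫ ≠ 0 := inner_self_ne_zero.mpr hα
  rw [reflMap_apply, mul_div_assoc, div_self h, mul_one]
  module

lemma reflMap_neg (α : V) : reflMap (-α) = reflMap α := by
  ext x
  simp only [reflMap_apply, inner_neg_right, inner_neg_left, neg_neg, smul_neg]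
  rw [mul_neg, neg_div, neg_smul, neg_neg]

lemma reflMap_involutive (α : V) : Function.Involutive (reflMap α) := by
  intro x
  rcases eq_or_ne α 0 with rfl | hα
  · simp [reflMap_apply]
  · have h : ⟪α, α⟫ ≠ 0 := inner_self_ne_zero.mpr hα
    simp only [reflMap_apply, inner_sub_left, real_inner_smul_left]
    rw [show 2 * (⟪x, α⟫ - 2 * ⟪x, α⟫ / ⟪α, α⟫ * ⟪α, α⟫) / ⟪α, α⟫
        = -(2 * ⟪x, α⟫ / ⟪α, α⟫) by field_simp; ring]
    module

lemma inner_reflMap_reflMap (α x y : V) : ⟪reflMap α x, reflMap α y⟫ = ⟪x, y⟫ := by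
  rcases eq_or_ne α 0 with rfl | hα
  · simp [reflMap_apply]
  · have h : ⟪α, α⟫ ≠ 0 := inner_self_ne_zero.mpr hα
    simp only [reflMap_apply, inner_sub_left, inner_sub_right, real_inner_smul_left,
      real_inner_smul_right, real_inner_comm α y]
    field_simp
    ring

lemma reflMap_map {u : V →ₗ[ℝ] V} (hu : ∀ x y, ⟪u x, u y⟫ = ⟪x, y⟫) (β x : V) :
    reflMap (u β) (u x) = u (reflMap β x) := by
  rw [reflMap_apply, reflMap_apply, map_sub, map_smul, hu, hu]

noncomputable def reflEquiv (α : V) : V ≃ₗ[ℝ] V :=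
  LinearEquiv.ofInvolutive (reflMap α) (reflMap_involutive α)

@[simp]
lemma reflEquiv_apply (α x : V) : reflEquiv α x = reflMap α x := rfl

lemma reflEquiv_mul_self (α : V) : reflEquiv α * reflEquiv α = 1 :=
  LinearEquiv.ext (reflMap_involutive α)

lemma reflEquiv_neg (α : V) : reflEquiv (-α) = reflEquiv α :=
  LinearEquiv.ext fun x => by rw [reflEquiv_apply, reflMap_neg, reflEquiv_apply]

section WeylGroup

variable {S : Set V}

lemma reflEquiv_mem_weylGroup {α : V} (hα : α ∈ S) : reflEquiv α ∈ weylGroup S :=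
  Subgroup.subset_closure ⟨α, hα, fun _ => rfl⟩

@[elab_as_elim]
lemma weylGroup_induction {p : (u : V ≃ₗ[ℝ] V) → u ∈ weylGroup S → Prop}
    (one : p 1 (one_mem _))
    (mul_left : ∀ α (hα : α ∈ S) u hu, p u hu →
      p (reflEquiv α * u) (mul_mem (reflEquiv_mem_weylGroup hα) hu))
    {u : V ≃ₗ[ℝ] V} (hu : u ∈ weylGroup S) : p u hu := by
  have gen : ∀ g ∈ {g : V ≃ₗ[ℝ] V | ∃ α ∈ S, ∀ x, g x = reflMap α x},
      ∃ α ∈ S, g = reflEquiv α ∧ g⁻¹ = reflEquiv α := by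
    rintro g ⟨α, hα, hg⟩
    obtain rfl : g = reflEquiv α := LinearEquiv.ext hg
    exact ⟨α, hα, rfl, inv_eq_of_mul_eq_one_right (reflEquiv_mul_self α)⟩
  induction hu using Subgroup.closure_induction_left with
  | one => exact one
  | mul_left g hg v _ hv =>
    obtain ⟨α, hα, rfl, -⟩ := gen g hg
    exact mul_left α hα v _ hv
  | inv_mul_cancel g hg v _ hv =>
    obtain ⟨α, hα, -, hinv⟩ := gen g hg
    simpa only [hinv] using mul_left α hα v _ hv

lemma inner_map_map_of_mem_weylGroup {u : V ≃ₗ[ℝ] V} (hu : u ∈ weylGroup S)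
    (x y : V) : ⟪u x, u y⟫ = ⟪x, y⟫ := by
  induction hu using weylGroup_induction generalizing x y with
  | one => rfl
  | mul_left α _ u _ ih => exact (inner_reflMap_reflMap α _ _).trans (ih x y)

lemma reflEquiv_map_mul {u : V ≃ₗ[ℝ] V} (hu : u ∈ weylGroup S) (β : V) :
    reflEquiv (u β) * u = u * reflEquiv β :=
  LinearEquiv.ext (reflMap_map (u := u.toLinearMap) (inner_map_map_of_mem_weylGroup hu) β)

lemma map_sub_self_mem_span {u : V ≃ₗ[ℝ] V} (hu : u ∈ weylGroup S) (x : V) :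
    u x - x ∈ Submodule.span ℝ S := by
  induction hu using weylGroup_induction with
  | one => simp
  | mul_left α hα u _ ih =>
    have key : reflEquiv α (u x) - x = (u x - x) - (2 * ⟪u x, α⟫ / ⟪α, α⟫) • α := by
      rw [reflEquiv_apply, reflMap_apply]; abel
    rw [LinearEquiv.mul_apply, key]
    exact sub_mem ih (Submodule.smul_mem _ _ (Submodule.subset_span hα))

lemma map_mem_of_mem_weylGroup {R : Set V} (hR : IsRootSystem R) (hS : S ⊆ R)
    {u : V ≃ₗ[ℝ] V} (hu : u ∈ weylGroup S) {β : V} (hβ : β ∈ R) : u β ∈ R := by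
  induction hu using weylGroup_induction with
  | one => exact hβ
  | mul_left α hα u _ ih => exact hR.refl_mem α (hS hα) _ ih

noncomputable def wordProd (l : List S) : V ≃ₗ[ℝ] V :=
  (l.map fun α => reflEquiv (α : V)).prod

lemma wordProd_nil : wordProd ([] : List S) = 1 := rfl

lemma wordProd_cons (α : S) (l : List S) :
    wordProd (α :: l) = reflEquiv (α : V) * wordProd l := by
  simp [wordProd]

lemma wordProd_append_singleton (l : List S) (α : S) :
    wordProd (l ++ [α]) = wordProd l * reflEquiv (α : V) := by
  simp [wordProd]

lemma wordProd_mem_weylGroup (l : List S) : wordProd l ∈ weylGroup S := by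
  induction l with
  | nil => exact one_mem _
  | cons α l ih => rw [wordProd_cons]; exact mul_mem (reflEquiv_mem_weylGroup α.2) ih

lemma exists_wordProd_eq {u : V ≃ₗ[ℝ] V} (hu : u ∈ weylGroup S) :
    ∃ l : List S, wordProd l = u := by
  induction hu using weylGroup_induction with
  | one => exact ⟨[], wordProd_nil⟩
  | mul_left α hα u _ ih =>
    obtain ⟨l, rfl⟩ := ih
    exact ⟨⟨α, hα⟩ :: l, wordProd_cons _ l⟩

end WeylGroup

section RootSystem

variable {R Δ : Set V}

lemma IsRootSystem.ne_zero (hR : IsRootSystem R) {β : V} (hβ : β ∈ R) : β ≠ 0 :=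
  fun h => hR.zero_not_mem (h ▸ hβ)

namespace IsBase

lemma subset_posRoots (hΔ : IsBase R Δ) : Δ ⊆ posRoots R Δ :=
  fun _ hα => ⟨hΔ.subset hα, AddSubmonoid.subset_closure hα⟩

lemma pos_or_neg (hΔ : IsBase R Δ) {β : V} (hβ : β ∈ R) :
    β ∈ posRoots R Δ ∨ -β ∈ posRoots R Δ :=
  (hΔ.pos_xor_neg β hβ).imp And.left And.left

lemma not_pos_of_neg (hΔ : IsBase R Δ) {β : V} (hβ : β ∈ R) (hneg : -β ∈ posRoots R Δ) :
    β ∉ posRoots R Δ :=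
  fun hpos => (hΔ.pos_xor_neg β hβ).elim (fun h => h.2 hneg) (fun h => h.2 hpos)

lemma span_eq_top (hΔ : IsBase R Δ) (hR : IsRootSystem R) : Submodule.span ℝ Δ = ⊤ := by
  rw [eq_top_iff, ← hR.span_top, Submodule.span_le]
  intro β hβ
  rcases hΔ.pos_or_neg hβ with hpos | hneg
  · exact Submodule.closure_subset_span hpos.2
  · simpa using neg_mem (Submodule.closure_subset_span hneg.2)

end IsBase

noncomputable def simpleBasis (hR : IsRootSystem R) (hΔ : IsBase R Δ) : Module.Basis Δ ℝ V :=
  .mk hΔ.indep (by rw [Subtype.range_coe, hΔ.span_eq_top hR])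

@[simp]
lemma simpleBasis_apply (hR : IsRootSystem R) (hΔ : IsBase R Δ) (i : Δ) :
    simpleBasis hR hΔ i = i :=
  Module.Basis.mk_apply _ _ _

lemma simpleBasis_repr_self (hR : IsRootSystem R) (hΔ : IsBase R Δ) {α : V} (hα : α ∈ Δ) :
    (simpleBasis hR hΔ).repr α = Finsupp.single ⟨α, hα⟩ 1 := by
  simpa using (simpleBasis hR hΔ).repr_self ⟨α, hα⟩

lemma simpleBasis_sumCoords_self (hR : IsRootSystem R) (hΔ : IsBase R Δ) {α : V}
    (hα : α ∈ Δ) : (simpleBasis hR hΔ).sumCoords α = 1 := by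
  simpa using (simpleBasis hR hΔ).sumCoords_self_apply (i := ⟨α, hα⟩)

lemma repr_nonneg_of_mem_closure (hR : IsRootSystem R) (hΔ : IsBase R Δ) {x : V}
    (hx : x ∈ AddSubmonoid.closure Δ) (i : Δ) : 0 ≤ (simpleBasis hR hΔ).repr x i := by
  classical
  induction hx using AddSubmonoid.closure_induction with
  | mem α hα =>
    rw [simpleBasis_repr_self hR hΔ hα, Finsupp.single_apply]
    split_ifs <;> norm_num
  | zero => simp
  | add x y _ _ hx hy => simpa using add_nonneg hx hy

lemma mem_posRoots_of_repr_pos (hR : IsRootSystem R) (hΔ : IsBase R Δ) {β : V} (hβ : β ∈ R)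
    {i : Δ} (hi : 0 < (simpleBasis hR hΔ).repr β i) : β ∈ posRoots R Δ := by
  refine (hΔ.pos_or_neg hβ).resolve_right fun hneg => ?_
  have := repr_nonneg_of_mem_closure hR hΔ hneg.2 i
  rw [map_neg, Finsupp.neg_apply] at this
  linarith

lemma mem_span_iff_repr_eq_zero (hR : IsRootSystem R) (hΔ : IsBase R Δ) {J : Set V}
    (hJ : J ⊆ Δ) {x : V} :
    x ∈ Submodule.span ℝ J ↔ ∀ i : Δ, (i : V) ∉ J → (simpleBasis hR hΔ).repr x i = 0 := by
  have hJ' : J = simpleBasis hR hΔ '' {i | (i : V) ∈ J} := by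
    ext y
    constructor
    · intro hy
      exact ⟨⟨y, hJ hy⟩, hy, simpleBasis_apply hR hΔ _⟩
    · rintro ⟨i, hi, rfl⟩
      simpa using hi
  conv_lhs => rw [hJ']
  rw [Module.Basis.mem_span_image]
  refine forall_congr' fun i => ?_
  rw [Finset.mem_coe, Finsupp.mem_support_iff, Set.mem_ofPred_eq, not_imp_comm]

lemma simple_mem_of_mem_span (hR : IsRootSystem R) (hΔ : IsBase R Δ) {J : Set V} (hJ : J ⊆ Δ)
    {α : V} (hα : α ∈ Δ) (hαJ : α ∈ Submodule.span ℝ J) : α ∈ J := by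
  by_contra hα'
  have := (mem_span_iff_repr_eq_zero hR hΔ hJ).mp hαJ ⟨α, hα⟩ hα'
  rw [simpleBasis_repr_self hR hΔ hα, Finsupp.single_eq_same] at this
  exact one_ne_zero this

lemma mem_posRoots_of_sub_mem_span (hR : IsRootSystem R) (hΔ : IsBase R Δ) {J : Set V}
    (hJ : J ⊆ Δ) {β y : V} (hβ : β ∈ posRoots R Δ) (hβJ : β ∉ Submodule.span ℝ J)
    (hy : y ∈ R) (hyβ : y - β ∈ Submodule.span ℝ J) : y ∈ posRoots R Δ := by
  obtain ⟨i, hiJ, hi⟩ : ∃ i : Δ, (i : V) ∉ J ∧ (simpleBasis hR hΔ).repr β i ≠ 0 := by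
    simpa using (mem_span_iff_repr_eq_zero hR hΔ hJ).not.mp hβJ
  have hyi : (simpleBasis hR hΔ).repr y i = (simpleBasis hR hΔ).repr β i := by
    have := (mem_span_iff_repr_eq_zero hR hΔ hJ).mp hyβ i hiJ
    rwa [map_sub, Finsupp.sub_apply, sub_eq_zero] at this
  exact mem_posRoots_of_repr_pos hR hΔ hy
    (hyi ▸ (repr_nonneg_of_mem_closure hR hΔ hβ.2 i).lt_of_ne' hi)

lemma mem_posRoots_or_mem_span_of_sub_mem_span (hR : IsRootSystem R) (hΔ : IsBase R Δ)
    {J : Set V} (hJ : J ⊆ Δ) {x y : V} (hx : x ∈ posRoots R Δ ∨ x ∈ Submodule.span ℝ J)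
    (hy : y ∈ R) (hyx : y - x ∈ Submodule.span ℝ J) :
    y ∈ posRoots R Δ ∨ y ∈ Submodule.span ℝ J := by
  by_cases hxJ : x ∈ Submodule.span ℝ J
  · exact .inr (by simpa using add_mem hyx hxJ)
  · exact .inl (mem_posRoots_of_sub_mem_span hR hΔ hJ (hx.resolve_right hxJ) hxJ hy hyx)

lemma eq_of_mem_posRoots_of_mem_span_singleton (hR : IsRootSystem R) (hΔ : IsBase R Δ)
    {γ β : V} (hγ : γ ∈ Δ) (hβ : β ∈ posRoots R Δ) (hβγ : β ∈ Submodule.span ℝ {γ}) :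
    β = γ := by
  obtain ⟨c, rfl⟩ := Submodule.mem_span_singleton.mp hβγ
  rcases hR.reduced γ (hΔ.subset hγ) c hβ.1 with rfl | rfl
  · exact one_smul ℝ γ
  · rw [neg_one_smul] at hβ
    exact absurd (hΔ.subset_posRoots hγ) (hΔ.not_pos_of_neg (hΔ.subset hγ) hβ)

lemma reflMap_mem_posRoots (hR : IsRootSystem R) (hΔ : IsBase R Δ) {γ β : V} (hγ : γ ∈ Δ)
    (hβ : β ∈ posRoots R Δ) (hβγ : β ≠ γ) : reflMap γ β ∈ posRoots R Δ :=
  mem_posRoots_of_sub_mem_span hR hΔ (Set.singleton_subset_iff.mpr hγ) hβ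
    (fun h => hβγ (eq_of_mem_posRoots_of_mem_span_singleton hR hΔ hγ hβ h))
    (hR.refl_mem γ (hΔ.subset hγ) β hβ.1)
    (map_sub_self_mem_span (reflEquiv_mem_weylGroup (Set.mem_singleton γ)) β)

lemma exists_inner_pos_of_mem_closure {β : V}
    (hβ : β ∈ AddSubmonoid.closure Δ) (hβ0 : β ≠ 0) : ∃ γ ∈ Δ, 0 < ⟪β, γ⟫ := by
  by_contra! h
  have hcone : ∀ x ∈ AddSubmonoid.closure Δ, ⟪β, x⟫ ≤ 0 := fun x hx => by
    induction hx using AddSubmonoid.closure_induction with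
    | mem γ hγ => exact h γ hγ
    | zero => simp
    | add x y _ _ hx hy => rw [inner_add_right]; exact add_nonpos hx hy
  exact (real_inner_self_pos.mpr hβ0).not_ge (hcone β hβ)

/-- A positive root of minimal height in the `W_Δ`-orbit of `β` is simple: otherwise some
simple reflection lowers its height. -/
lemma exists_mem_weylGroup_map_eq (hR : IsRootSystem R) (hΔ : IsBase R Δ) {β : V}
    (hβ : β ∈ posRoots R Δ) : ∃ v ∈ weylGroup Δ, ∃ γ ∈ Δ, v γ = β := by
  obtain ⟨x, ⟨hx, v, hv, rfl⟩, hmin⟩ :=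
    Set.exists_min_image {x ∈ posRoots R Δ | ∃ v ∈ weylGroup Δ, v x = β}
      (simpleBasis hR hΔ).sumCoords (hR.finite.subset fun x hx => hx.1.1)
      ⟨β, hβ, 1, one_mem _, rfl⟩
  refine ⟨v, hv, x, ?_, rfl⟩
  by_contra hxΔ
  obtain ⟨γ, hγ, hpos⟩ := exists_inner_pos_of_mem_closure hx.2 (hR.ne_zero hx.1)
  have hsx := reflMap_mem_posRoots hR hΔ hγ hx fun h => hxΔ (h ▸ hγ)
  have hle := hmin (reflMap γ x) ⟨hsx, v * reflEquiv γ,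
    mul_mem hv (reflEquiv_mem_weylGroup hγ), by simp [reflMap_involutive γ x]⟩
  rw [reflMap_apply, map_sub, map_smul, simpleBasis_sumCoords_self hR hΔ hγ] at hle
  have : 0 < 2 * ⟪x, γ⟫ / ⟪γ, γ⟫ :=
    div_pos (by linarith) (real_inner_self_pos.mpr (hR.ne_zero (hΔ.subset hγ)))
  simp only [smul_eq_mul, mul_one] at hle
  linarith

lemma reflEquiv_mem_weylGroup_of_isBase (hR : IsRootSystem R) (hΔ : IsBase R Δ) {β : V}
    (hβ : β ∈ R) : reflEquiv β ∈ weylGroup Δ := by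
  have key : ∀ β ∈ posRoots R Δ, reflEquiv β ∈ weylGroup Δ := by
    intro β hβ
    obtain ⟨v, hv, γ, hγ, rfl⟩ := exists_mem_weylGroup_map_eq hR hΔ hβ
    rw [← mul_inv_cancel_right (reflEquiv (v γ)) v, reflEquiv_map_mul hv]
    exact mul_mem (mul_mem hv (reflEquiv_mem_weylGroup hγ)) (inv_mem hv)
  rcases hΔ.pos_or_neg hβ with hpos | hneg
  · exact key β hpos
  · exact reflEquiv_neg β ▸ key (-β) hneg

lemma weylGroup_le_weylGroup_of_isBase (hR : IsRootSystem R) (hΔ : IsBase R Δ) :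
    weylGroup R ≤ weylGroup Δ := by
  rw [weylGroup, Subgroup.closure_le]
  rintro g ⟨β, hβ, hg⟩
  obtain rfl : g = reflEquiv β := LinearEquiv.ext hg
  exact reflEquiv_mem_weylGroup_of_isBase hR hΔ hβ

lemma exists_wordProd_eq_mul_reflEquiv (hR : IsRootSystem R) (hΔ : IsBase R Δ) (l : List Δ)
    (α : Δ) (hneg : -(wordProd l α) ∈ posRoots R Δ) :
    ∃ l' : List Δ, l'.length < l.length ∧ wordProd l' = wordProd l * reflEquiv (α : V) := by
  induction l with
  | nil =>
    rw [wordProd_nil] at hneg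
    exact absurd (hΔ.subset_posRoots α.2) (hΔ.not_pos_of_neg (hΔ.subset α.2) hneg)
  | cons γ t ih =>
    rw [wordProd_cons] at hneg ⊢
    have htα : wordProd t α ∈ R :=
      map_mem_of_mem_weylGroup hR hΔ.subset (wordProd_mem_weylGroup t) (hΔ.subset α.2)
    rcases hΔ.pos_or_neg htα with hpos | htneg
    · -- `s_γ` permutes `R⁺ \ {γ}`
      have hγ : wordProd t α = γ := by
        by_contra hne
        exact hΔ.not_pos_of_neg (hR.refl_mem γ (hΔ.subset γ.2) _ htα) hneg
          (reflMap_mem_posRoots hR hΔ γ.2 hpos hne)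
      refine ⟨t, by simp, ?_⟩
      rw [← hγ, reflEquiv_map_mul (wordProd_mem_weylGroup t), mul_assoc, reflEquiv_mul_self,
        mul_one]
    · obtain ⟨t', ht', heq⟩ := ih htneg
      exact ⟨γ :: t', by simpa using ht', by rw [wordProd_cons, heq, mul_assoc]⟩

lemma wordProd_mem_weylGroup_of_forall_simple (hR : IsRootSystem R) (hΔ : IsBase R Δ) {J : Set V}
    (hJ : J ⊆ Δ) (l : List Δ)
    (hl : ∀ γ ∈ Δ, wordProd l γ ∈ posRoots R Δ ∨ wordProd l γ ∈ Submodule.span ℝ J) :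
    wordProd l ∈ weylGroup J := by
  induction hn : l.length using Nat.strong_induction_on generalizing l with
  | _ n ih =>
  rcases l.eq_nil_or_concat' with rfl | ⟨t, α, rfl⟩
  · exact one_mem _
  have ht : t.length < n := by simp [← hn]
  have hu := wordProd_append_singleton t α
  set u := wordProd (t ++ [α])
  have huα : u α = -(wordProd t α) := by
    rw [hu, LinearEquiv.mul_apply, reflEquiv_apply, reflMap_self (hR.ne_zero (hΔ.subset α.2)),
      map_neg]
  by_cases hpos : u α ∈ posRoots R Δ
  · obtain ⟨t', ht', heq⟩ := exists_wordProd_eq_mul_reflEquiv hR hΔ t α (huα ▸ hpos)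
    rw [hu, ← heq] at hl ⊢
    exact ih _ (ht'.trans ht) t' hl rfl
  have huαJ : u α ∈ Submodule.span ℝ J := (hl α α.2).resolve_left hpos
  have hsub : ∀ x, wordProd t x - u x ∈ Submodule.span ℝ J := by
    intro x
    have ht_eq : wordProd t = u * reflEquiv (α : V) := by
      rw [hu, mul_assoc, reflEquiv_mul_self, mul_one]
    rw [ht_eq, LinearEquiv.mul_apply, reflEquiv_apply, reflMap_apply, map_sub, map_smul,
      sub_sub_cancel_left]
    exact neg_mem (Submodule.smul_mem _ _ huαJ)
  have htJ : wordProd t ∈ weylGroup J := by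
    refine ih _ ht t (fun γ hγ => ?_) rfl
    exact mem_posRoots_or_mem_span_of_sub_mem_span hR hΔ hJ (hl γ hγ)
      (map_mem_of_mem_weylGroup hR hΔ.subset (wordProd_mem_weylGroup t) (hΔ.subset hγ))
      (hsub γ)
  have hαJ : (α : V) ∈ J := by
    refine simple_mem_of_mem_span hR hΔ hJ α.2 ?_
    have htα : wordProd t α ∈ Submodule.span ℝ J := by
      simpa [huα] using neg_mem huαJ
    simpa using sub_mem htα (map_sub_self_mem_span htJ α)
  rw [hu]
  exact mul_mem htJ (reflEquiv_mem_weylGroup hαJ)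

lemma mem_weylGroup_of_forall_simple (hR : IsRootSystem R) (hΔ : IsBase R Δ) {J : Set V}
    (hJ : J ⊆ Δ) {u : V ≃ₗ[ℝ] V} (hu : u ∈ weylGroup R)
    (h : ∀ γ ∈ Δ, u γ ∈ posRoots R Δ ∨ u γ ∈ Submodule.span ℝ J) : u ∈ weylGroup J := by
  obtain ⟨l, rfl⟩ := exists_wordProd_eq (weylGroup_le_weylGroup_of_isBase hR hΔ hu)
  exact wordProd_mem_weylGroup_of_forall_simple hR hΔ hJ l h

lemma map_mem_span_of_forall_simple (hR : IsRootSystem R) (hΔ : IsBase R Δ) {J : Set V}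
    (hJ : J ⊆ Δ) {w : V ≃ₗ[ℝ] V} (hw : w ∈ weylGroup R)
    (h : ∀ α ∈ Δ, w α ∈ posRoots R Δ → w α ∈ Submodule.span ℝ J) {β : V}
    (hβ : β ∈ posRoots R Δ) (hwβ : w β ∈ posRoots R Δ) : w β ∈ Submodule.span ℝ J := by
  refine (mem_span_iff_repr_eq_zero hR hΔ hJ).mpr fun i hi => ?_
  have hcone : ∀ x ∈ AddSubmonoid.closure Δ, (simpleBasis hR hΔ).repr (w x) i ≤ 0 := by
    intro x hx
    induction hx using AddSubmonoid.closure_induction with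
    | mem α hα =>
      rcases hΔ.pos_or_neg (map_mem_of_mem_weylGroup hR le_rfl hw (hΔ.subset hα))
        with hpos | hneg
      · exact ((mem_span_iff_repr_eq_zero hR hΔ hJ).mp (h α hα hpos) i hi).le
      · simpa using repr_nonneg_of_mem_closure hR hΔ hneg.2 i
    | zero => simp
    | add x y _ _ hx hy => simpa using add_nonpos hx hy
  exact le_antisymm (hcone β hβ.2) (repr_nonneg_of_mem_closure hR hΔ hwβ.2 i)

lemma Spos_eq_empty_iff (J : Set V) (w : V ≃ₗ[ℝ] V) :
    Spos R Δ J w = ∅ ↔ ∀ α ∈ Δ, w α ∈ posRoots R Δ → w α ∈ Submodule.span ℝ J := by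
  simp only [Set.eq_empty_iff_forall_notMem, Spos, rootsIn, Set.mem_ofPred_eq, not_and,
    Set.mem_inter_iff, SetLike.mem_coe, Classical.not_imp, not_not]
  exact forall₂_congr fun α _ => ⟨fun h hpos => (h hpos).2, fun h hpos => ⟨hpos.1, h hpos⟩⟩

lemma neg_map_mem_posRoots {w₀ : V ≃ₗ[ℝ] V} (hw₀ : ⇑w₀ '' posRoots R Δ = -(posRoots R Δ))
    {β : V} (hβ : β ∈ posRoots R Δ) : -(w₀ β) ∈ posRoots R Δ :=
  Set.mem_neg.mp (hw₀ ▸ Set.mem_image_of_mem w₀ hβ)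

lemma neg_inv_map_mem_posRoots {w₀ : V ≃ₗ[ℝ] V}
    (hw₀ : ⇑w₀ '' posRoots R Δ = -(posRoots R Δ)) {γ : V} (hγ : γ ∈ posRoots R Δ) :
    -(w₀⁻¹ γ) ∈ posRoots R Δ := by
  obtain ⟨β, hβ, hβγ⟩ : -γ ∈ w₀ '' posRoots R Δ := by rw [hw₀]; simpa using hγ
  rw [← neg_neg γ, ← hβγ]
  simpa using hβ

end RootSystem

theorem Spos_empty_iff_mem_coset_general (R Δ J₀ : Set V)
    (hR : IsRootSystem R) (hΔ : IsBase R Δ) (hJ₀ : J₀ ⊆ Δ)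
    (w₀ : V ≃ₗ[ℝ] V) (hw₀W : w₀ ∈ weylGroup R)
    (hw₀ : ⇑w₀ '' posRoots R Δ = -(posRoots R Δ))
    (w : V ≃ₗ[ℝ] V) (hw : w ∈ weylGroup R) :
    Spos R Δ J₀ w = ∅ ↔ w * w₀⁻¹ ∈ weylGroup J₀ := by
  rw [Spos_eq_empty_iff]
  constructor
  · intro hS
    refine mem_weylGroup_of_forall_simple hR hΔ hJ₀ (mul_mem hw (inv_mem hw₀W)) fun γ hγ => ?_
    have hβ := neg_inv_map_mem_posRoots hw₀ (hΔ.subset_posRoots hγ)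
    have huγ : (w * w₀⁻¹) γ = -(w (-(w₀⁻¹ γ))) := by simp
    rw [huγ]
    rcases hΔ.pos_or_neg (map_mem_of_mem_weylGroup hR le_rfl hw hβ.1) with hpos | hneg
    · exact .inr (neg_mem (map_mem_span_of_forall_simple hR hΔ hJ₀ hw hS hβ hpos))
    · exact .inl hneg
  · intro hu α hα hwα
    have hβ := neg_map_mem_posRoots hw₀ (hΔ.subset_posRoots hα)
    have hwα_eq : w α = -((w * w₀⁻¹) (-(w₀ α))) := by simp
    rcases mem_posRoots_or_mem_span_of_sub_mem_span hR hΔ hJ₀ (.inl hβ)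
      (map_mem_of_mem_weylGroup hR (hJ₀.trans hΔ.subset) hu hβ.1)
      (map_sub_self_mem_span hu _) with hpos | hspan
    · exact absurd hwα (hΔ.not_pos_of_neg hwα.1 (by rwa [hwα_eq, neg_neg]))
    · exact hwα_eq ▸ neg_mem hspan

/-- §9.2, Lemma on the partition of `Δ`, part (2):
if `w₀ ∈ W` is a longest element, i.e. `w₀·R⁺ = -R⁺`, then for every `w ∈ W`,
the set `S_w⁺` is empty if and only if `w ∈ W_{J₀}·w₀`, i.e. `w·w₀⁻¹ ∈ W_{J₀}`. -/
theorem Spos_empty_iff_mem_coset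
    [FiniteDimensional ℝ V] (R Δ J₀ : Set V)
    (hR : IsRootSystem R) (hΔ : IsBase R Δ) (hJ₀ : J₀ ⊆ Δ)
    (w₀ : V ≃ₗ[ℝ] V) (hw₀W : w₀ ∈ weylGroup R)
    (hw₀ : ⇑w₀ '' posRoots R Δ = -(posRoots R Δ))
    (w : V ≃ₗ[ℝ] V) (hw : w ∈ weylGroup R) :
    Spos R Δ J₀ w = ∅ ↔ w * w₀⁻¹ ∈ weylGroup J₀ :=
  Spos_empty_iff_mem_coset_general R Δ J₀ hR hΔ hJ₀ w₀ hw₀W hw₀ w hw
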